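/- Let L/K be a Galois extension of number fields, F the Galois closure of L over Q, and C a conjugacy class of Gal(L/K). Then there exists a conjugacy class C' of Gal(F/Q) such that for every rational prime p with Frobenius class (F/Q, p) = C', there is a prime ideal P of K above p with Frobenius class (L/K, P) = C and N(P) = p. -/

import Mathlib

/-!
Lift a representative `τ` of `C` to `σ₀ ∈ Gal(F/K)` and take for `C'` the class of `σ₀` in
`Gal(F/ℚ)`. If `p` has Frobenius class `C'`, conjugating the prime shows that `σ₀` itself is a
Frobenius at some prime `𝔔` of `F` above `p`. As `σ₀` fixes `K`, every residue class of `𝓞 K`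
modulo `P = 𝔔 ∩ 𝓞 K` satisfies `x ^ p = x`, so `𝓞 K ⧸ P` is the prime field and `N(P) = p`;
restricting `σ₀` to `L` then makes `τ` a Frobenius at `𝔔 ∩ 𝓞 L` over `P`.
-/

open Polynomial

theorem natCard_eq_of_forall_pow_eq_self {k D : Type*} [Field k] [Finite k] [CommRing D]
    [IsDomain D] (f : k →+* D) (h : ∀ x : D, x ^ Nat.card k = x) :
    Nat.card D = Nat.card k := by
  classical
  set q := Nat.card k
  have hq : 1 < q := Finite.one_lt_card
  have hdeg : (X ^ q - X : D[X]).natDegree = q := by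
    rw [natDegree_sub_eq_left_of_natDegree_lt] <;> simp [hq]
  have hne : (X ^ q - X : D[X]) ≠ 0 := ne_zero_of_natDegree_gt (hdeg ▸ hq)
  set Z := (X ^ q - X : D[X]).roots.toFinset
  let e : Z ≃ D := Equiv.subtypeUnivEquiv fun x => by simp [Z, mem_roots hne, h x]
  have : Finite D := Finite.of_equiv Z e
  refine le_antisymm ?_ (Nat.card_le_card_of_injective f f.injective)
  calc Nat.card D = Z.card := by rw [← Nat.card_congr e, Nat.card_eq_finsetCard]
    _ ≤ q := hdeg ▸ card_le_degree_of_subset_roots (Multiset.dedup_subset _)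

namespace AlgHom.IsArithFrobAt

variable {R A S : Type*} [CommRing R] [CommRing A] [CommRing S] [Algebra R A] [Algebra A S]
  [Algebra R S] [IsScalarTower R A S] {φ : S →ₐ[A] S} {Q : Ideal S}

theorem natCard_quotient_under_eq [Q.IsPrime] [(Q.under R).IsMaximal]
    (H : (φ.restrictScalars R).IsArithFrobAt Q) :
    Nat.card (A ⧸ Q.under A) = Nat.card (R ⧸ Q.under R) := by
  let _ := Ideal.Quotient.field (Q.under R)
  have := H.finite_quotient
  refine natCard_eq_of_forall_pow_eq_self
    (Ideal.quotientMap (Q.under A) (algebraMap R A) (Ideal.under_under Q).ge) fun x => ?_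
  obtain ⟨a, rfl⟩ := Ideal.Quotient.mk_surjective x
  rw [← map_pow, eq_comm, Ideal.Quotient.eq, Ideal.mem_under, map_sub, map_pow]
  simpa using H (algebraMap A S a)

theorem of_restrictScalars [Q.IsPrime] [(Q.under R).IsMaximal]
    (H : (φ.restrictScalars R).IsArithFrobAt Q) : φ.IsArithFrobAt Q := by
  intro x
  rw [H.natCard_quotient_under_eq]
  exact H x

theorem under {B : Type*} [CommRing B] [Algebra A B] [Algebra B S] [IsScalarTower A B S]
    {ψ : B →ₐ[A] B} (hφψ : ∀ x, φ (algebraMap B S x) = algebraMap B S (ψ x))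
    (H : φ.IsArithFrobAt Q) : ψ.IsArithFrobAt (Q.under B) := by
  intro x
  rw [Ideal.under_under, Ideal.mem_under, map_sub, map_pow, ← hφψ]
  exact H _

end AlgHom.IsArithFrobAt

namespace NumberField

theorem algebraMap_galRestrict_restrictNormal {K L F : Type*} [Field K] [Field L] [Field F]
    [NumberField K] [NumberField F] [Algebra K L] [Algebra L F] [Algebra K F]
    [IsScalarTower K L F] [Normal K L] (σ : F ≃ₐ[K] F) (x : 𝓞 L) :
    algebraMap (𝓞 L) (𝓞 F) (galRestrict (𝓞 K) K L (𝓞 L) (σ.restrictNormal L) x) =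
      galRestrict (𝓞 K) K F (𝓞 F) σ (algebraMap (𝓞 L) (𝓞 F) x) := by
  apply RingOfIntegers.coe_injective
  rw [algebraMap_galRestrict_apply, ← IsScalarTower.algebraMap_apply,
    ← IsScalarTower.algebraMap_apply, IsScalarTower.algebraMap_apply (𝓞 L) L F,
    IsScalarTower.algebraMap_apply (𝓞 L) L F, algebraMap_galRestrict_apply,
    AlgEquiv.restrictNormal_commutes]

theorem galRestrict_restrictScalars {K F : Type*} [Field K] [Field F] [NumberField K]
    [NumberField F] [Algebra K F] [Algebra ℚ K] [IsScalarTower ℚ K F] (σ : F ≃ₐ[K] F) :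
    galRestrict ℤ ℚ F (𝓞 F) (σ.restrictScalars ℚ) =
      (galRestrict (𝓞 K) K F (𝓞 F) σ).restrictScalars ℤ := by
  ext x
  simp [algebraMap_galRestrict_apply]

end NumberField

open NumberField Pointwise

theorem stmt4_general (K L F : Type) [Field K] [Field L] [Field F]
    [NumberField K] [NumberField F]
    [Algebra ℚ K] [Algebra K L] [Algebra L F] [Algebra K F]
    [IsScalarTower K L F] [IsScalarTower ℚ K F]
    [IsGalois K L] [IsGalois ℚ F]
    (C : ConjClasses (L ≃ₐ[K] L)) :
    ∃ C' : ConjClasses (F ≃ₐ[ℚ] F),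
      ∀ p : ℕ, p.Prime →
        -- `p` is unramified in `F`
        (∀ Qf : Ideal (𝓞 F), Qf.IsPrime → (p : 𝓞 F) ∈ Qf →
          Ideal.ramificationIdx' (Ideal.span {(p : ℤ)}) Qf = 1) →
        -- the Frobenius class `(F/ℚ, p)` equals `C'`
        (∃ (Qf : Ideal (𝓞 F)) (σ : F ≃ₐ[ℚ] F), Qf.IsPrime ∧
          Ideal.comap (algebraMap ℤ (𝓞 F)) Qf = Ideal.span {(p : ℤ)} ∧
          Ideal.comap (galRestrict ℤ ℚ F (𝓞 F) σ) Qf = Qf ∧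
          (∀ x : 𝓞 F, galRestrict ℤ ℚ F (𝓞 F) σ x - x ^ p ∈ Qf) ∧
          ConjClasses.mk σ = C') →
        -- then there is a degree-one prime `P` of `K` above `p` with `(L/K, P) = C`
        ∃ P : Ideal (𝓞 K), P.IsPrime ∧
          Ideal.comap (algebraMap ℤ (𝓞 K)) P = Ideal.span {(p : ℤ)} ∧
          Ideal.absNorm P = p ∧
          ∃ (Q : Ideal (𝓞 L)) (τ : L ≃ₐ[K] L), Q.IsPrime ∧
            Ideal.comap (algebraMap (𝓞 K) (𝓞 L)) Q = P ∧
            Ideal.comap (galRestrict (𝓞 K) K L (𝓞 L) τ) Q = Q ∧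
            (∀ x : 𝓞 L, galRestrict (𝓞 K) K L (𝓞 L) τ x - x ^ Ideal.absNorm P ∈ Q) ∧
            ConjClasses.mk τ = C := by
  have : IsGalois K F := IsGalois.tower_top_of_isGalois ℚ K F
  obtain ⟨_, rfl⟩ := C.exists_rep
  obtain ⟨σ₀, rfl⟩ := AlgEquiv.restrictNormalHom_surjective (K₁ := L) F ‹_›
  refine ⟨ConjClasses.mk (σ₀.restrictScalars ℚ), ?_⟩
  rintro p hp - ⟨Q₀, σ, hQ₀, hQ₀p, -, hσ, hσC⟩
  obtain ⟨g, hg⟩ := isConj_iff.mp (ConjClasses.mk_eq_mk_iff_isConj.mp hσC)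
  let G := galRestrict ℤ ℚ F (𝓞 F)
  set Q := G g • Q₀
  have hQp : Q.under ℤ = Ideal.span {(p : ℤ)} := (Ideal.under_smul _ _ _).trans hQ₀p
  have : Fact p.Prime := ⟨hp⟩
  have : (Q.under ℤ).IsMaximal := hQp ▸ Int.ideal_span_isMaximal_of_prime p
  have H₀ : IsArithFrobAt ℤ (G σ) Q₀ := by
    intro x
    rw [Ideal.under_def, hQ₀p, Int.card_ideal_quot]
    exact hσ x
  have H' : ((galRestrict (𝓞 K) K F (𝓞 F) σ₀).toAlgHom.restrictScalars ℤ).IsArithFrobAt Q := by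
    have := H₀.conj (G g)
    rw [← map_mul, ← map_inv, ← map_mul, hg, galRestrict_restrictScalars] at this
    exact this
  have hN : Ideal.absNorm (Q.under (𝓞 K)) = p := by
    rw [Ideal.absNorm_apply, Submodule.cardQuot_apply, H'.natCard_quotient_under_eq, hQp,
      Int.card_ideal_quot]
  have HL := H'.of_restrictScalars.under
    (ψ := (galRestrict (𝓞 K) K L (𝓞 L) (σ₀.restrictNormal L)).toAlgHom)
    (algebraMap_galRestrict_restrictNormal σ₀ · |>.symm)
  refine ⟨Q.under (𝓞 K), inferInstance, (Ideal.under_under Q).trans hQp, hN, Q.under (𝓞 L), _,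
    inferInstance, Ideal.under_under Q, HL.comap_eq, fun x => ?_, rfl⟩
  have := HL x
  rwa [Ideal.under_under, ← Submodule.cardQuot_apply, ← Ideal.absNorm_apply] at this

/-- Proposition 3.2 of the paper.  Let `L/K` be a Galois extension of
number fields, `F` the Galois closure of `L` over `ℚ` (modelled as a number field containing
`L` that is Galois over `ℚ`), and `C` a conjugacy class of `Gal(L/K)`.  Then there exists a
conjugacy class `C'` of `Gal(F/ℚ)` such that for every rational prime `p`, unramified in `F`,
with Frobenius class `(F/ℚ, p) = C'`, there is a prime ideal `P` of `K` above `p` with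
Frobenius class `(L/K, P) = C` and `N(P) = p`.  The Frobenius class of a prime is witnessed
by a prime above it together with an automorphism stabilizing that prime and inducing the
appropriate power map on the residue field. -/
theorem stmt4 (K L F : Type) [Field K] [Field L] [Field F]
    [NumberField K] [NumberField L] [NumberField F]
    [Algebra ℚ K] [Algebra K L] [Algebra L F] [Algebra K F]
    [IsScalarTower ℚ K L] [IsScalarTower K L F] [IsScalarTower ℚ K F]
    [IsGalois K L] [IsGalois ℚ F]
    (C : ConjClasses (L ≃ₐ[K] L)) :
    ∃ C' : ConjClasses (F ≃ₐ[ℚ] F),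
      ∀ p : ℕ, p.Prime →
        -- `p` is unramified in `F`
        (∀ Qf : Ideal (𝓞 F), Qf.IsPrime → (p : 𝓞 F) ∈ Qf →
          Ideal.ramificationIdx' (Ideal.span {(p : ℤ)}) Qf = 1) →
        -- the Frobenius class `(F/ℚ, p)` equals `C'`
        (∃ (Qf : Ideal (𝓞 F)) (σ : F ≃ₐ[ℚ] F), Qf.IsPrime ∧
          Ideal.comap (algebraMap ℤ (𝓞 F)) Qf = Ideal.span {(p : ℤ)} ∧
          Ideal.comap (galRestrict ℤ ℚ F (𝓞 F) σ) Qf = Qf ∧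
          (∀ x : 𝓞 F, galRestrict ℤ ℚ F (𝓞 F) σ x - x ^ p ∈ Qf) ∧
          ConjClasses.mk σ = C') →
        -- then there is a degree-one prime `P` of `K` above `p` with `(L/K, P) = C`
        ∃ P : Ideal (𝓞 K), P.IsPrime ∧
          Ideal.comap (algebraMap ℤ (𝓞 K)) P = Ideal.span {(p : ℤ)} ∧
          Ideal.absNorm P = p ∧
          ∃ (Q : Ideal (𝓞 L)) (τ : L ≃ₐ[K] L), Q.IsPrime ∧
            Ideal.comap (algebraMap (𝓞 K) (𝓞 L)) Q = P ∧
            Ideal.comap (galRestrict (𝓞 K) K L (𝓞 L) τ) Q = Q ∧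
            (∀ x : 𝓞 L, galRestrict (𝓞 K) K L (𝓞 L) τ x - x ^ Ideal.absNorm P ∈ Q) ∧
            ConjClasses.mk τ = C :=
  stmt4_general K L F C
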